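/- arXiv:1905.08004 — 4 statements merged into one kernel-verified Lean document; each statement's English description precedes it below -/
import Mathlib

section
/- Let θ > 0, σ > 0, r ≥ 0, and constants ε, C with 0 < ε ≤ λ ≤ C and |μ| ≤ C. Define h(π) = -(θ/4 + θ²/8)σ²π² + (θ/2)(μ + λ - r)π + λ - λ(1-π)^{-θ/2} for π ∈ (-∞, 1). Then there exists a constant K > 0, depending only on θ, σ, r, ε, C, such that |sup_{π < 1} h(π)| ≤ K. -/
open Real Set

/-- uniform bound on the supremum of the risk-sensitive driver at
`(ξ,v) = (0,0)` (Lemma on boundedness of the terminal value). -/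
theorem stmt0 (θ σ r ε C : ℝ) (hθ : 0 < θ) (hσ : 0 < σ) (hr : 0 ≤ r)
    (hε : 0 < ε) (hεC : ε ≤ C) :
    ∃ K > (0:ℝ), ∀ μ lam : ℝ, ε ≤ lam → lam ≤ C → |μ| ≤ C →
      |sSup ((fun p : ℝ =>
        -(θ/4 + θ^2/8) * σ^2 * p^2 + (θ/2) * (μ + lam - r) * p
          + lam - lam * (1 - p) ^ (-(θ/2))) '' Set.Iio (1:ℝ))| ≤ K := by
  have hC : 0 < C := lt_of_lt_of_le hε hεC
  set a : ℝ := (θ/4 + θ^2/8) * σ^2 with ha_def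
  have ha : 0 < a := by positivity
  set B : ℝ := θ/2 * (2*C + r) with hB_def
  have hB : 0 < B := by positivity
  refine ⟨B^2/(4*a) + C, by positivity, ?_⟩
  intro μ lam hl1 hl2 hmu
  set f : ℝ → ℝ := fun p : ℝ =>
    -(θ/4 + θ^2/8) * σ^2 * p^2 + (θ/2) * (μ + lam - r) * p
      + lam - lam * (1 - p) ^ (-(θ/2)) with hf
  have hlam : 0 < lam := lt_of_lt_of_le hε hl1
  -- bound b
  set b : ℝ := (θ/2) * (μ + lam - r) with hb_def
  have hbB : |b| ≤ B := by
    rw [hb_def, hB_def, abs_mul]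
    have h1 : |θ/2| = θ/2 := abs_of_pos (by positivity)
    rw [h1]
    have : |μ + lam - r| ≤ 2*C + r := by
      have h2 : |lam| ≤ C := abs_le.mpr ⟨by linarith, hl2⟩
      have := abs_le.mp hmu
      have := abs_le.mp h2
      rw [abs_le]
      constructor <;> linarith
    nlinarith
  -- upper bound for each point
  have hub : ∀ p ∈ Set.Iio (1:ℝ), f p ≤ B^2/(4*a) + C := by
    intro p hp
    have hp1 : 0 < 1 - p := by simp at hp; linarith
    have hpow : 0 < (1 - p) ^ (-(θ/2)) := Real.rpow_pos_of_pos hp1 _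
    have h1 : lam - lam * (1 - p) ^ (-(θ/2)) ≤ C := by
      nlinarith
    have h2 : -a * p^2 + b * p ≤ B^2/(4*a) := by
      have key : b^2/(4*a) * (4*a) = b^2 := div_mul_cancel₀ _ (by positivity)
      have hsq : (2*a*p - b)^2 ≥ 0 := sq_nonneg _
      have hbb : b^2 ≤ B^2 := by nlinarith [abs_nonneg b, sq_abs b, abs_le.mp hbB]
      have h3 : -a * p^2 + b * p ≤ b^2/(4*a) := by nlinarith
      have h4 : b^2/(4*a) ≤ B^2/(4*a) := by gcongr
      linarith
    have : f p = -a * p^2 + b * p + (lam - lam * (1 - p) ^ (-(θ/2))) := by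
      rw [hf, ha_def, hb_def]; ring
    rw [this]; linarith
  -- the set contains 0 (value at p = 0)
  have h0mem : (0:ℝ) ∈ f '' Set.Iio (1:ℝ) := by
    refine ⟨0, by norm_num, ?_⟩
    rw [hf]
    simp [Real.one_rpow]
  have hbdd : BddAbove (f '' Set.Iio (1:ℝ)) := ⟨B^2/(4*a) + C, by
    rintro x ⟨p, hp, rfl⟩; exact hub p hp⟩
  have hles : sSup (f '' Set.Iio (1:ℝ)) ≤ B^2/(4*a) + C :=
    Real.sSup_le (by rintro x ⟨p, hp, rfl⟩; exact hub p hp) (by positivity)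
  have hges : 0 ≤ sSup (f '' Set.Iio (1:ℝ)) := le_csSup hbdd h0mem
  rw [abs_of_nonneg hges]
  exact hles
end

section
/- Let W : [0,∞) × Ω → ℝ be a stochastic process and τ : Ω → [0,∞] a random time, and fix t ≥ 0. Let F̆ᵢ_t = σ(W(s) : s ≤ t) ∨ σ(1_{τ ≤ s} : s ≤ t) and let F^{Mi}_t = σ(W(s ∧ τ) : s ≤ t) ∨ σ(1_{τ ≤ s} : s ≤ t). Then for every bounded F̆ᵢ_t-measurable random variable ξ, the random variable ξ·1_{τ ≥ t} is F^{Mi}_t-measurable. -/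
open MeasureTheory Set

/-- if `ξ` is measurable w.r.t. the σ-algebra generated by the
(unstopped) process and the default indicator up to time `t`, then
`ξ·1_{τ ≥ t}` is measurable w.r.t. the σ-algebra generated by the stopped
process and the default indicator up to time `t`. -/
theorem stmt8 {Ω : Type*} (W : NNReal → Ω → ℝ) (τ : Ω → ENNReal) (t : NNReal)
    (ξ : Ω → ℝ) (hbdd : ∃ K : ℝ, ∀ ω, |ξ ω| ≤ K)
    (hmeas : Measurable[
        (⨆ s ∈ Set.Iic t, MeasurableSpace.comap (W s) inferInstance) ⊔
        (⨆ s ∈ Set.Iic t, MeasurableSpace.comap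
          (fun ω => Set.indicator {ω' : Ω | τ ω' ≤ (s : ENNReal)} (fun _ => (1:ℝ)) ω)
          inferInstance)] ξ) :
    Measurable[
        (⨆ s ∈ Set.Iic t, MeasurableSpace.comap
          (fun ω => W (min (s : ENNReal) (τ ω)).toNNReal ω) inferInstance) ⊔
        (⨆ s ∈ Set.Iic t, MeasurableSpace.comap
          (fun ω => Set.indicator {ω' : Ω | τ ω' ≤ (s : ENNReal)} (fun _ => (1:ℝ)) ω)
          inferInstance)]
      (fun ω => ξ ω * Set.indicator {ω' : Ω | (t : ENNReal) ≤ τ ω'} (fun _ => (1:ℝ)) ω) := by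
  clear hbdd
  classical
  set m₂ : MeasurableSpace Ω :=
      (⨆ s ∈ Set.Iic t, MeasurableSpace.comap
          (fun ω => W (min (s : ENNReal) (τ ω)).toNNReal ω) inferInstance) ⊔
        (⨆ s ∈ Set.Iic t, MeasurableSpace.comap
          (fun ω => Set.indicator {ω' : Ω | τ ω' ≤ (s : ENNReal)} (fun _ => (1:ℝ)) ω)
          inferInstance) with hm₂
  set A : Set Ω := {ω' : Ω | (t : ENNReal) ≤ τ ω'} with hAdef
  -- measurability of {τ ≤ s} in m₂ for s ≤ t
  have hind : ∀ s : NNReal, s ≤ t → MeasurableSet[m₂] {ω | τ ω ≤ (s : ENNReal)} := by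
    intro s hs
    have hle : MeasurableSpace.comap
        (fun ω => Set.indicator {ω' : Ω | τ ω' ≤ (s : ENNReal)} (fun _ => (1:ℝ)) ω)
        inferInstance ≤ m₂ := by
      refine le_trans ?_ le_sup_right
      exact @le_iSup₂ (MeasurableSpace Ω) NNReal (fun s => s ∈ Set.Iic t) _
        (fun s _ => MeasurableSpace.comap
          (fun ω => Set.indicator {ω' : Ω | τ ω' ≤ (s : ENNReal)} (fun _ => (1:ℝ)) ω)
          inferInstance) s (Set.mem_Iic.mpr hs)
    have hmeasg : Measurable[m₂]
        (fun ω => Set.indicator {ω' : Ω | τ ω' ≤ (s : ENNReal)} (fun _ => (1:ℝ)) ω) := by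
      rw [measurable_iff_comap_le]; exact hle
    have : {ω | τ ω ≤ (s : ENNReal)} =
        (fun ω => Set.indicator {ω' : Ω | τ ω' ≤ (s : ENNReal)} (fun _ => (1:ℝ)) ω) ⁻¹' {1} := by
      ext ω
      by_cases h : τ ω ≤ (s : ENNReal) <;> simp [Set.indicator, h]
    rw [this]
    exact hmeasg (measurableSet_singleton 1)
  have hA : MeasurableSet[m₂] A := by
    have hlt : {ω | τ ω < (t : ENNReal)} =
        ⋃ q : ℚ, if h : (Real.toNNReal q : ENNReal) < (t : ENNReal) then
          {ω | τ ω ≤ (Real.toNNReal q : ENNReal)} else (∅ : Set Ω) := by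
      ext ω
      simp only [Set.mem_setOf_eq, Set.mem_iUnion]
      constructor
      · intro h
        obtain ⟨q, hq0, hq1, hq2⟩ := (ENNReal.lt_iff_exists_rat_btwn).mp h
        exact ⟨q, by rw [dif_pos hq2]; exact Set.mem_setOf_eq ▸ hq1.le⟩
      · rintro ⟨q, hq⟩
        by_cases h : (Real.toNNReal q : ENNReal) < (t : ENNReal)
        · rw [dif_pos h] at hq
          exact lt_of_le_of_lt hq h
        · rw [dif_neg h] at hq; exact absurd hq (Set.notMem_empty ω)
    have : A = {ω | τ ω < (t : ENNReal)}ᶜ := by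
      ext ω; simp [hAdef, not_lt]
    rw [this, hlt]
    refine (MeasurableSet.iUnion ?_).compl
    intro q
    by_cases h : (Real.toNNReal q : ENNReal) < (t : ENNReal)
    · rw [dif_pos h]
      exact hind _ (by exact_mod_cast h.le)
    · rw [dif_neg h]; exact MeasurableSet.empty
  -- the auxiliary measurable space
  let m' : MeasurableSpace Ω :=
    { MeasurableSet' := fun S => MeasurableSet[m₂] (A ∩ S)
      measurableSet_empty := by simp
      measurableSet_compl := fun S hS => by
        have h : A ∩ Sᶜ = A \ (A ∩ S) := by ext ω; simp only [Set.mem_inter_iff, Set.mem_compl_iff, Set.mem_diff]; tauto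
        simpa [h] using hA.diff hS
      measurableSet_iUnion := fun f hf => by
        simp only [Set.inter_iUnion]
        exact MeasurableSet.iUnion hf }
  have hm2m' : m₂ ≤ m' := by
    intro S hS
    exact hA.inter hS
  have hm1 : ((⨆ s ∈ Set.Iic t, MeasurableSpace.comap (W s) inferInstance) ⊔
        (⨆ s ∈ Set.Iic t, MeasurableSpace.comap
          (fun ω => Set.indicator {ω' : Ω | τ ω' ≤ (s : ENNReal)} (fun _ => (1:ℝ)) ω)
          inferInstance)) ≤ m' := by
    refine sup_le ?_ (le_trans le_sup_right hm2m')
    refine iSup₂_le fun s hs => ?_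
    rw [← measurable_iff_comap_le]
    intro B hB
    show MeasurableSet[m₂] (A ∩ W s ⁻¹' B)
    have hstop : MeasurableSpace.comap
        (fun ω => W (min (s : ENNReal) (τ ω)).toNNReal ω) inferInstance ≤ m₂ := by
      refine le_trans ?_ le_sup_left
      exact @le_iSup₂ (MeasurableSpace Ω) NNReal (fun s => s ∈ Set.Iic t) _
        (fun s _ => MeasurableSpace.comap
          (fun ω => W (min (s : ENNReal) (τ ω)).toNNReal ω) inferInstance) s hs
    have hstopm : Measurable[m₂] (fun ω => W (min (s : ENNReal) (τ ω)).toNNReal ω) := by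
      rw [measurable_iff_comap_le]; exact hstop
    have hkey : A ∩ W s ⁻¹' B =
        A ∩ (fun ω => W (min (s : ENNReal) (τ ω)).toNNReal ω) ⁻¹' B := by
      ext ω
      simp only [Set.mem_inter_iff, Set.mem_preimage, and_congr_right_iff]
      intro hω
      have hst : (s : ENNReal) ≤ τ ω := le_trans (by exact_mod_cast hs) hω
      have : min (s : ENNReal) (τ ω) = (s : ENNReal) := min_eq_left hst
      rw [this, ENNReal.toNNReal_coe]
    rw [hkey]
    exact hA.inter (hstopm hB)
  -- conclude
  have hξ : Measurable[m'] ξ := hmeas.le hm1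
  intro B hB
  have hset : (fun ω => ξ ω * Set.indicator A (fun _ => (1:ℝ)) ω) ⁻¹' B =
      (A ∩ ξ ⁻¹' B) ∪ (Aᶜ ∩ (if (0:ℝ) ∈ B then Set.univ else ∅)) := by
    ext ω
    by_cases h : ω ∈ A
    · simp [Set.indicator, h]
    · by_cases h0 : (0:ℝ) ∈ B <;> simp [Set.indicator, h, h0]
  show MeasurableSet[m₂] _
  rw [hset]
  refine MeasurableSet.union (hξ hB) ?_
  by_cases h0 : (0:ℝ) ∈ B
  · simpa [h0] using hA.compl
  · simp [h0]
end

section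
/- Let θ > 0, σ > 0, and constants ε, C, r with 0 < ε ≤ λ ≤ C, |μ| ≤ C, r ≥ 0. Define, for π ∈ (-∞,1), Z ∈ ℝ, V ∈ ℝ with |V| ≤ C_T: h(π) = -(θ/4)σ²π² + (θ/2)(μ + λ - r)π - (1/2)((θ/2)σπ - Z)² + λ - λ(1-π)^{-θ/2} e^{V}. If π* maximizes h over (-∞,1), then there exist constants R₁, R₂ > 0, depending only on θ, σ, ε, C, r, C_T, such that (π*)² ≤ R₁ Z² + R₂. -/
open Real Set

set_option maxHeartbeats 1600000 in
/-- quadratic growth bound `(p*)² ≤ R₁Z² + R₂` for the maximizer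
of the driver. -/
theorem stmt10 (θ σ ε C r CT : ℝ) (hθ : 0 < θ) (hσ : 0 < σ) (hε : 0 < ε)
    (hεC : ε ≤ C) (hr : 0 ≤ r) :
    ∃ R₁ > (0:ℝ), ∃ R₂ > (0:ℝ), ∀ μ lam Z V ps : ℝ,
      ε ≤ lam → lam ≤ C → |μ| ≤ C → |V| ≤ CT → ps < 1 →
      (∀ p : ℝ, p < 1 →
        -(θ/4) * σ^2 * p^2 + (θ/2) * (μ + lam - r) * p
          - (1/2) * ((θ/2) * σ * p - Z)^2 + lam
          - lam * (1 - p) ^ (-(θ/2)) * Real.exp V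
        ≤ -(θ/4) * σ^2 * ps^2 + (θ/2) * (μ + lam - r) * ps
          - (1/2) * ((θ/2) * σ * ps - Z)^2 + lam
          - lam * (1 - ps) ^ (-(θ/2)) * Real.exp V) →
      ps^2 ≤ R₁ * Z^2 + R₂ := by
  have hC : 0 < C := lt_of_lt_of_le hε hεC
  set K : ℝ := θ * σ^2 / 4 with hKdef
  have hK : 0 < K := by positivity
  set B : ℝ := θ/2 * (2*C + r) with hBdef
  have hB : 0 < B := by positivity
  set M : ℝ := C * Real.exp CT with hMdef
  have hM : 0 < M := by positivity
  refine ⟨4/(θ*σ^2), by positivity,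
    (8*M*(θ*σ^2) + 16*B^2 + (θ*σ^2)^2)/(θ*σ^2)^2, by positivity, ?_⟩
  intro μ lam Z V ps h1 h2 h3 h4 h5 h
  have hlam : 0 < lam := lt_of_lt_of_le hε h1
  have h0 := h 0 one_pos
  clear h
  have hT : 0 < (1 - ps) ^ (-(θ/2)) := Real.rpow_pos_of_pos (by linarith) _
  have hexpV : 0 < Real.exp V := Real.exp_pos V
  have hexpLe : Real.exp V ≤ Real.exp CT := Real.exp_le_exp.mpr (le_of_abs_le h4)
  have hlE : lam * Real.exp V ≤ M := by
    rw [hMdef]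
    exact mul_le_mul h2 hexpLe hexpV.le hC.le
  simp only [Real.one_rpow, sub_zero, mul_zero, zero_pow, mul_one] at h0
  -- key quadratic bound
  have hmu1 : μ ≤ C := le_of_abs_le h3
  have hmu2 : -C ≤ μ := neg_le_of_abs_le h3
  have hTpos : 0 < lam * (1 - ps) ^ (-(θ/2)) * Real.exp V :=
    mul_pos (mul_pos hlam hT) hexpV
  have hk : K * ps^2 ≤ (θ/2) * (μ + lam - r) * ps + (1/2) * Z^2 + M := by
    nlinarith [sq_nonneg ((θ/2) * σ * ps - Z), h0, hTpos, hlE]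
  set c : ℝ := (θ/2) * (μ + lam - r) with hcdef
  have hc1 : c ≤ B := by
    rw [hcdef, hBdef]
    linarith [mul_nonneg hθ.le (by linarith : (0:ℝ) ≤ C - μ),
      mul_nonneg hθ.le (by linarith : (0:ℝ) ≤ C - lam), mul_nonneg hθ.le hr]
  have hc2 : -B ≤ c := by
    rw [hcdef, hBdef]
    linarith [mul_nonneg hθ.le (by linarith : (0:ℝ) ≤ μ + C),
      mul_nonneg hθ.le (by linarith : (0:ℝ) ≤ lam + C)]
  have hk2 : K * (K * ps^2) ≤ K * (c * ps + (1/2) * Z^2 + M) :=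
    mul_le_mul_of_nonneg_left hk hK.le
  have hcp : 2 * (K * (c * ps)) ≤ K^2 * ps^2 + B^2 := by
    rcases le_or_gt 0 ps with hps | hps
    · nlinarith [sq_nonneg (K*ps - B), mul_nonneg (mul_nonneg hK.le hps) (sub_nonneg.mpr hc1)]
    · nlinarith [sq_nonneg (K*ps + B),
        mul_nonneg (mul_nonneg hK.le (neg_nonneg.mpr hps.le)) (by linarith : (0:ℝ) ≤ B + c)]
  have key : K^2 * ps^2 ≤ K * Z^2 + 2*K*M + B^2 + K^2 := by
    nlinarith [hk2, hcp, sq_nonneg K]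
  have hne : θ * σ^2 ≠ 0 := by positivity
  have heq : K^2 * (4/(θ*σ^2) * Z^2 + (8*M*(θ*σ^2) + 16*B^2 + (θ*σ^2)^2)/(θ*σ^2)^2)
      = K * Z^2 + 2*K*M + B^2 + K^2 := by
    rw [hKdef]; field_simp; ring
  have : K^2 * ps^2 ≤ K^2 * (4/(θ*σ^2) * Z^2 + (8*M*(θ*σ^2) + 16*B^2 + (θ*σ^2)^2)/(θ*σ^2)^2) := by
    rw [heq]; exact key
  exact le_of_mul_le_mul_left this (by positivity)
end

section
/- Let N ≥ 1, θ > 0, R_N, R_{T,N}, C_T > 0, and let ρ̂_N be the increasing C¹ truncation with ρ̂_N(x) = x on (0,N], ρ̂_N'∈[0,1], ρ̂_N ≤ N+1. Suppose |V| ≤ R_{T,N} and π* ∈ [-R_N, 1). Then ∫₀¹ (1-π*)^{-θ/2} ρ̂_N(e^{sV}) · (e^{sV} ρ̂_N'(e^{sV}) / ρ̂_N(e^{sV})) ds ≥ (1+R_N)^{-θ/2} · (1/R_{T,N}) · (1 - e^{-(R_{T,N} ∧ ln N)}), and consequently the difference quotient bound 1 - ∫₀¹ (1-π*)^{-θ/2}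 e^{sV} ρ̂_N'(e^{sV}) ds ≤ 1 - δ_{T,N} holds with δ_{T,N} := (1+R_N)^{-θ/2} R_{T,N}^{-1} (1 - e^{-(R_{T,N} ∧ ln N)}) > 0. -/
open Real intervalIntegral

/-- the key lower bound on the integrated jump-derivative term
in the comparison estimate (5.14). -/
theorem stmt14 (N : ℝ) (hN : 1 ≤ N) (θ RN RTN : ℝ)
    (hθ : 0 < θ) (hRN : 0 < RN) (hRTN : 0 < RTN)
    (ρ ρ' : ℝ → ℝ)
    (hderiv : ∀ x > (0:ℝ), HasDerivAt ρ (ρ' x) x)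
    (hmono : MonotoneOn ρ (Set.Ioi (0:ℝ)))
    (hd : ∀ x > (0:ℝ), 0 ≤ ρ' x ∧ ρ' x ≤ 1)
    (hid : ∀ x : ℝ, 0 < x → x ≤ N → ρ x = x)
    (hub : ∀ x > (0:ℝ), ρ x ≤ N + 1)
    (hpos : ∀ x > (0:ℝ), 0 < ρ x)
    (V πs : ℝ) (hV : |V| ≤ RTN) (hπl : -RN ≤ πs) (hπu : πs < 1) :
    ((1 + RN) ^ (-(θ/2)) * (1/RTN) * (1 - Real.exp (-(min RTN (Real.log N)))) ≤
      ∫ s in (0:ℝ)..1, (1 - πs) ^ (-(θ/2)) * ρ (Real.exp (s*V)) *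
        (Real.exp (s*V) * ρ' (Real.exp (s*V)) / ρ (Real.exp (s*V)))) ∧
    (1 - ∫ s in (0:ℝ)..1, (1 - πs) ^ (-(θ/2)) * Real.exp (s*V) * ρ' (Real.exp (s*V)) ≤
      1 - (1 + RN) ^ (-(θ/2)) * RTN⁻¹ * (1 - Real.exp (-(min RTN (Real.log N))))) := by
  have hN0 : (0:ℝ) < N := lt_of_lt_of_le one_pos hN
  have hlogN : 0 ≤ Real.log N := Real.log_nonneg hN
  set c : ℝ := (1 + RN) ^ (-(θ/2)) with hc
  set c' : ℝ := (1 - πs) ^ (-(θ/2)) with hc'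
  have hπ0 : (0:ℝ) < 1 - πs := by linarith
  have hcpos : 0 < c := Real.rpow_pos_of_pos (by linarith) _
  have hc'pos : 0 < c' := Real.rpow_pos_of_pos hπ0 _
  have hcc' : c ≤ c' :=
    Real.rpow_le_rpow_of_nonpos hπ0 (by linarith) (by linarith)
  have hVlb : -RTN ≤ V := neg_le_of_abs_le hV
  have hVub : V ≤ RTN := le_of_abs_le hV
  -- the derivative of ρ is 1 on (0, N]
  have hρ'one : ∀ x : ℝ, 0 < x → x ≤ N → ρ' x = 1 := by
    intro x hx hxN
    rcases lt_or_eq_of_le hxN with h | h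
    · have hmem : Set.Ioo (0:ℝ) N ∈ nhds x := Ioo_mem_nhds hx h
      have h1 : HasDerivAt ρ 1 x := by
        refine (hasDerivAt_id x).congr_of_eventuallyEq ?_
        filter_upwards [hmem] with y hy
        exact hid y hy.1 hy.2.le
      exact (hderiv x hx).unique h1
    · subst h
      have hU : UniqueDiffWithinAt ℝ (Set.Iic x) x :=
        uniqueDiffOn_Iic x x Set.self_mem_Iic
      have h1 : HasDerivWithinAt ρ (ρ' x) (Set.Iic x) x :=
        (hderiv x hx).hasDerivWithinAt
      have hmem : Set.Ioc (0:ℝ) x ∈ nhdsWithin x (Set.Iic x) := by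
        apply mem_nhdsWithin.mpr
        exact ⟨Set.Ioi 0, isOpen_Ioi, hx, fun y hy => ⟨hy.1, hy.2⟩⟩
      have h2 : HasDerivWithinAt ρ 1 (Set.Iic x) x := by
        refine (hasDerivWithinAt_id x _).congr_of_eventuallyEq ?_
          (by simpa using hid x hx le_rfl)
        filter_upwards [hmem] with y hy
        exact hid y hy.1 hy.2
      have e1 := h1.derivWithin hU
      have e2 := h2.derivWithin hU
      rw [← e1, e2]
  -- abbreviation for the true integrand
  set f : ℝ → ℝ := fun s => c' * Real.exp (s*V) * ρ' (Real.exp (s*V)) with hf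
  have hfnn : ∀ s : ℝ, 0 ≤ f s := fun s =>
    mul_nonneg (mul_nonneg hc'pos.le (Real.exp_pos _).le)
      (hd _ (Real.exp_pos _)).1
  -- measurability and integrability of f on [0,1]
  have hfeq : f = fun s => c' * Real.exp (s*V) * deriv ρ (Real.exp (s*V)) := by
    funext s
    simp only [hf]
    rw [(hderiv _ (Real.exp_pos (s*V))).deriv]
  have hfmeas : Measurable f := by
    rw [hfeq]
    exact (measurable_const.mul (Real.measurable_exp.comp
      (measurable_id.mul_const V))).mul ((measurable_deriv ρ).comp
      (Real.measurable_exp.comp (measurable_id.mul_const V)))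
  have hfint01 : IntervalIntegrable f MeasureTheory.volume 0 1 := by
    rw [intervalIntegrable_iff]
    refine MeasureTheory.Integrable.mono'
      (g := fun _ => c' * Real.exp |V|)
      (MeasureTheory.integrableOn_const measure_Ioc_lt_top.ne enorm_ne_top)
      hfmeas.aestronglyMeasurable ?_
    filter_upwards [MeasureTheory.ae_restrict_mem measurableSet_uIoc] with s hs
    rw [Set.uIoc_of_le (zero_le_one)] at hs
    have h1 : s * V ≤ |V| := by
      calc s * V ≤ s * |V| := mul_le_mul_of_nonneg_left (le_abs_self V) hs.1.le
        _ ≤ 1 * |V| := mul_le_mul_of_nonneg_right hs.2 (abs_nonneg V)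
        _ = |V| := one_mul _
    have h2 : f s ≤ c' * Real.exp |V| := by
      calc f s ≤ c' * Real.exp (s*V) * 1 :=
            mul_le_mul_of_nonneg_left (hd _ (Real.exp_pos _)).2
              (mul_nonneg hc'pos.le (Real.exp_pos _).le)
        _ = c' * Real.exp (s*V) := mul_one _
        _ ≤ c' * Real.exp |V| :=
            mul_le_mul_of_nonneg_left (Real.exp_le_exp.2 h1) hc'pos.le
    rw [Real.norm_eq_abs, abs_of_nonneg (hfnn s)]
    exact h2
  -- the cutoff time
  set t : ℝ := min 1 (Real.log N / RTN) with ht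
  have ht0 : 0 ≤ t := le_min zero_le_one (div_nonneg hlogN hRTN.le)
  have ht1 : t ≤ 1 := min_le_left _ _
  have hfintl : IntervalIntegrable f MeasureTheory.volume 0 t :=
    hfint01.mono_set (Set.uIcc_subset_uIcc
      (Set.mem_uIcc.2 (Or.inl ⟨le_rfl, zero_le_one⟩))
      (Set.mem_uIcc.2 (Or.inl ⟨ht0, ht1⟩)))
  have hfintr : IntervalIntegrable f MeasureTheory.volume t 1 :=
    hfint01.mono_set (Set.uIcc_subset_uIcc
      (Set.mem_uIcc.2 (Or.inl ⟨ht0, ht1⟩))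
      (Set.mem_uIcc.2 (Or.inl ⟨zero_le_one, le_rfl⟩)))
  -- pointwise lower bound on [0, t]
  have hpt : ∀ s ∈ Set.Icc 0 t, c * Real.exp (-RTN * s) ≤ f s := by
    intro s hs
    have hs0 : 0 ≤ s := hs.1
    have hsV : s * V ≤ Real.log N := by
      calc s * V ≤ s * RTN := mul_le_mul_of_nonneg_left hVub hs0
        _ ≤ (Real.log N / RTN) * RTN :=
            mul_le_mul_of_nonneg_right (hs.2.trans (min_le_right _ _)) hRTN.le
        _ = Real.log N := div_mul_cancel₀ _ hRTN.ne'
    have hxN : Real.exp (s*V) ≤ N := by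
      calc Real.exp (s*V) ≤ Real.exp (Real.log N) := Real.exp_le_exp.2 hsV
        _ = N := Real.exp_log hN0
    have hρ'1 : ρ' (Real.exp (s*V)) = 1 := hρ'one _ (Real.exp_pos _) hxN
    have hee : Real.exp (-RTN * s) ≤ Real.exp (s*V) := by
      apply Real.exp_le_exp.2
      have h := mul_le_mul_of_nonneg_left hVlb hs0
      linarith
    calc c * Real.exp (-RTN * s) ≤ c' * Real.exp (s*V) :=
          mul_le_mul hcc' hee (Real.exp_pos _).le hc'pos.le
      _ = f s := by simp [hf, hρ'1]
  -- value of the comparison integral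
  have hRTNt : RTN * t = min RTN (Real.log N) := by
    rw [ht, mul_min_of_nonneg _ _ hRTN.le, mul_one,
      mul_div_cancel₀ _ hRTN.ne']
  have hkey : ∫ s in (0:ℝ)..t, Real.exp (-RTN * s)
      = -(RTN)⁻¹ * Real.exp (-RTN * t) - -(RTN)⁻¹ * Real.exp (-RTN * 0) := by
    have h := intervalIntegral.integral_eq_sub_of_hasDerivAt
      (f := fun u : ℝ => -(RTN)⁻¹ * Real.exp (-RTN * u))
      (f' := fun s : ℝ => Real.exp (-RTN * s)) (a := 0) (b := t)
      (fun s _ => by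
        have h := (((hasDerivAt_id s).const_mul (-RTN)).exp).const_mul (-(RTN)⁻¹)
        refine h.congr_deriv ?_
        simp only [id, mul_one]
        rw [mul_left_comm, neg_mul_neg, inv_mul_cancel₀ hRTN.ne', mul_one])
      ((Real.continuous_exp.comp
        (continuous_const.mul continuous_id)).intervalIntegrable _ _)
    simpa using h
  have hcompint : ∫ s in (0:ℝ)..t, c * Real.exp (-RTN * s)
      = c * (1/RTN) * (1 - Real.exp (-(min RTN (Real.log N)))) := by
    rw [intervalIntegral.integral_const_mul, hkey,
      show -RTN * t = -(min RTN (Real.log N)) by rw [← hRTNt]; ring]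
    rw [mul_zero, Real.exp_zero]
    field_simp
    ring
  -- main lower bound
  have hmain : c * (1/RTN) * (1 - Real.exp (-(min RTN (Real.log N))))
      ≤ ∫ s in (0:ℝ)..1, f s := by
    have h3 : ∫ s in (0:ℝ)..t, c * Real.exp (-RTN * s)
        ≤ ∫ s in (0:ℝ)..t, f s :=
      intervalIntegral.integral_mono_on ht0
        ((continuous_const.mul (Real.continuous_exp.comp
          (continuous_const.mul continuous_id))).intervalIntegrable _ _)
        hfintl hpt
    have h4 : 0 ≤ ∫ s in t..1, f s :=
      intervalIntegral.integral_nonneg ht1 (fun u _ => hfnn u)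
    have h5 : ∫ s in (0:ℝ)..1, f s
        = (∫ s in (0:ℝ)..t, f s) + ∫ s in t..1, f s :=
      (intervalIntegral.integral_add_adjacent_intervals hfintl hfintr).symm
    linarith
  constructor
  · have heq1 : (∫ s in (0:ℝ)..1, c' * ρ (Real.exp (s*V)) *
        (Real.exp (s*V) * ρ' (Real.exp (s*V)) / ρ (Real.exp (s*V))))
        = ∫ s in (0:ℝ)..1, f s := by
      apply intervalIntegral.integral_congr
      intro s _
      have hne : ρ (Real.exp (s*V)) ≠ 0 := (hpos _ (Real.exp_pos _)).ne'
      simp only [hf]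
      field_simp
    rw [heq1]
    exact hmain
  · have heq2 : (∫ s in (0:ℝ)..1, c' * Real.exp (s*V) * ρ' (Real.exp (s*V)))
        = ∫ s in (0:ℝ)..1, f s := by
      apply intervalIntegral.integral_congr
      intro s _
      simp [hf]
    rw [heq2]
    have : c * RTN⁻¹ * (1 - Real.exp (-(min RTN (Real.log N))))
        = c * (1/RTN) * (1 - Real.exp (-(min RTN (Real.log N)))) := by
      rw [one_div]
    linarith
end
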